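/- Let N = U₁ ∪ ⋯ ∪ U_s with the U_j pairwise disjoint, and suppose the utility function U is invariant under permutations that move clients between different unions but sensitive only to the order within unions, i.e., U(σ(𝔖)) = U(τ(𝔖)) whenever σ and τ lie in the same coset of Π^λ|_S in Sym(S). Then the partial ordinal Shapley value equals φ_i = (1/n)·Σ_{S ⊆ N\{i}} (1/C(n-1,|S|))·Σ_{σ ∈ Π^λ|_S} (1/(s₁!⋯s_s!))·(U(σ(𝔖), i) − U(σ(𝔖))), with s_j = |U_j ∩ S|. -/

import Mathlib

section helpers
variable {n s : ℕ} (f : Fin n → Fin s)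

lemma PO.perm_of_filters {l₁ l₂ : List (Fin n)}
    (h : ∀ j, (l₁.filter (fun x => f x = j)).Perm (l₂.filter (fun x => f x = j))) :
    l₁.Perm l₂ := by
  rw [List.perm_iff_count]
  intro a
  have h1 : List.count a (l₁.filter (fun x => f x = f a)) = List.count a l₁ :=
    List.count_filter (by simp)
  have h2 : List.count a (l₂.filter (fun x => f x = f a)) = List.count a l₂ :=
    List.count_filter (by simp)
  rw [← h1, ← h2, (h (f a)).count_eq]

lemma PO.eq_of_filters : ∀ (l₁ l₂ : List (Fin n)), l₁.map f = l₂.map f →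
    (∀ j, l₁.filter (fun x => f x = j) = l₂.filter (fun x => f x = j)) → l₁ = l₂
  | [], [], _, _ => rfl
  | [], b :: t₂, hm, _ => by simp at hm
  | a :: t₁, [], hm, _ => by simp at hm
  | a :: t₁, b :: t₂, hm, hf => by
    simp only [List.map_cons, List.cons.injEq] at hm
    obtain ⟨hab, hm2⟩ := hm
    have key := hf (f a)
    simp only [List.filter_cons, hab.symm, decide_true, if_true, decide_eq_true_eq,
      if_pos rfl, List.cons.injEq] at key
    obtain ⟨hab2, hta⟩ := key
    have ht : t₁ = t₂ := by
      apply PO.eq_of_filters t₁ t₂ hm2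
      intro j
      by_cases hj : f a = j
      · exact hj ▸ hta
      · have h3 := hf j
        rw [List.filter_cons, List.filter_cons] at h3
        have hbj : ¬ (f b = j) := fun h => hj (hab.trans h)
        simpa [hj, hbj] using h3
    rw [hab2, ht]

/-- Given a label word `w` and per-label lists `o` with matching lengths, there is a list
with that word and those filters. -/
lemma PO.exists_of_word : ∀ (w : List (Fin s)) (o : Fin s → List (Fin n)),
    (∀ j, ∀ x ∈ o j, f x = j) → (∀ j, (o j).length = w.count j) →
    ∃ m : List (Fin n), m.map f = w ∧ ∀ j, m.filter (fun x => f x = j) = o j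
  | [], o, _, hlen => by
    refine ⟨[], rfl, fun j => ?_⟩
    have := hlen j
    simp at this
    simp [this]
  | j :: w', o, hmem, hlen => by
    have hpos : 0 < (o j).length := by
      rw [hlen j, List.count_cons_self]; omega
    obtain ⟨b, t, hbt⟩ : ∃ b t, o j = b :: t := by
      cases h : o j with
      | nil => rw [h] at hpos; simp at hpos
      | cons b t => exact ⟨b, t, rfl⟩
    have hfb : f b = j := hmem j b (by rw [hbt]; exact List.mem_cons_self)
    set o' : Fin s → List (Fin n) := Function.update o j t with ho'
    have hmem' : ∀ j', ∀ x ∈ o' j', f x = j' := by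
      intro j' x hx
      by_cases hj : j' = j
      · subst hj
        rw [ho', Function.update_self] at hx
        exact hmem j' x (by rw [hbt]; exact List.mem_cons_of_mem b hx)
      · rw [ho', Function.update_of_ne hj] at hx
        exact hmem j' x hx
    have hlen' : ∀ j', (o' j').length = w'.count j' := by
      intro j'
      by_cases hj : j' = j
      · subst hj
        rw [ho', Function.update_self]
        have := hlen j'
        rw [hbt, List.count_cons_self] at this
        simpa using Nat.succ_injective (by simpa using this)
      · rw [ho', Function.update_of_ne hj]
        have := hlen j'
        rwa [List.count_cons_of_ne (Ne.symm hj)] at this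
    obtain ⟨m', hm'w, hm'f⟩ := PO.exists_of_word w' o' hmem' hlen'
    refine ⟨b :: m', by simp [hfb, hm'w], fun j' => ?_⟩
    by_cases hj : j' = j
    · subst hj
      rw [List.filter_cons]
      simp only [hfb, decide_true, if_true]
      rw [hm'f j', ho', Function.update_self, hbt]
    · rw [List.filter_cons]
      have : ¬ (f b = j') := fun h => hj (h ▸ hfb ▸ rfl)
      rw [hm'f j', ho', Function.update_of_ne hj]
      simp [this]

lemma PO.count_word {l : List (Fin n)} (j : Fin s) :
    List.count j (l.map f) = (l.filter (fun x => f x = j)).length := by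
  rw [List.count, List.countP_congr (q := fun a => decide (a = j))
    (fun x _ => by simp [beq_eq_decide]), List.countP_map, ← List.countP_eq_length_filter]
  rfl

lemma PO.len_filter_of_perm {l L : List (Fin n)} (h : l.Perm L) (j : Fin s) :
    (l.filter (fun x => f x = j)).length = List.count j (L.map f) := by
  rw [PO.count_word f j, ((h.filter (fun x => decide (f x = j)))).length_eq]

/-- For any word `w ~ L.map f` and any `l ~ L`, there is `m ~ L` with word `w` and
the same filters as `l`. -/
lemma PO.exists_rearrange {L l : List (Fin n)} {w : List (Fin s)}
    (hw : w.Perm (L.map f)) (hl : l.Perm L) :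
    ∃ m : List (Fin n), m.Perm L ∧ m.map f = w ∧
      ∀ j, m.filter (fun x => f x = j) = l.filter (fun x => f x = j) := by
  obtain ⟨m, hmw, hmf⟩ := PO.exists_of_word f w (fun j => l.filter (fun x => f x = j))
    (fun j x hx => by
      have := List.of_mem_filter hx
      simpa using this)
    (fun j => by rw [PO.len_filter_of_perm f hl, hw.count_eq])
  exact ⟨m, (PO.perm_of_filters f (fun j => by rw [hmf j]; exact hl.filter _)),
    hmw, hmf⟩

lemma PO.sum_fiber (L : List (Fin n)) (hL : L.Nodup) (g : List (Fin n) → ℝ)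
    (hg : ∀ l₁ l₂ : List (Fin n), l₁.Perm L → l₂.Perm L →
      (∀ j, l₁.filter (fun x => f x = j) = l₂.filter (fun x => f x = j)) → g l₁ = g l₂) :
    ∑ l ∈ L.permutations.toFinset, g l
      = ((L.map f).permutations.toFinset.card : ℝ) *
        ∑ m ∈ L.permutations.toFinset.filter (fun m => m.map f = L.map f), g m := by
  classical
  set P := L.permutations.toFinset with hP
  set Q := P.filter (fun m => m.map f = L.map f) with hQ
  have hmemP : ∀ l, l ∈ P ↔ l.Perm L := by
    intro l; rw [hP, List.mem_toFinset, List.mem_permutations]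
  -- step 1: expand each g l as a sum over Q
  have step1 : ∀ l ∈ P, g l = ∑ m ∈ Q,
      (if (∀ j, m.filter (fun x => f x = j) = l.filter (fun x => f x = j)) then g m else 0) := by
    intro l hl
    have hlL : l.Perm L := (hmemP l).1 hl
    obtain ⟨m₀, hm₀L, hm₀w, hm₀f⟩ := PO.exists_rearrange f (List.Perm.refl (L.map f)) hlL
    have hm₀Q : m₀ ∈ Q := by
      rw [hQ, Finset.mem_filter]
      exact ⟨(hmemP m₀).2 hm₀L, by simp [hm₀w]⟩
    rw [Finset.sum_eq_single_of_mem m₀ hm₀Q]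
    · rw [if_pos hm₀f]
      exact (hg m₀ l hm₀L hlL hm₀f).symm
    · intro m hm hne
      rw [if_neg]
      intro hcon
      apply hne
      apply PO.eq_of_filters f m m₀
      · have h1 : m.map f = L.map f := by
          have := (Finset.mem_filter.1 hm).2
          simpa using this
        rw [h1, hm₀w]
      · intro j; rw [hcon j, hm₀f j]
  rw [Finset.sum_congr rfl step1, Finset.sum_comm]
  -- step 2: for each m ∈ Q, the inner sum is (fiber card) * g m
  rw [Finset.mul_sum]
  apply Finset.sum_congr rfl
  intro m hm
  have hmL : m.Perm L := (hmemP m).1 (Finset.mem_filter.1 hm).1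
  rw [← Finset.sum_filter, Finset.sum_const]
  have hcard : (P.filter (fun l =>
      (∀ j, m.filter (fun x => f x = j) = l.filter (fun x => f x = j)))).card
      = (L.map f).permutations.toFinset.card := by
    apply Finset.card_bij (fun l _ => l.map f)
    · intro l hlf
      have hlL : l.Perm L := (hmemP l).1 (Finset.mem_filter.1 hlf).1
      rw [List.mem_toFinset, List.mem_permutations]
      exact hlL.map f
    · intro l₁ h₁ l₂ h₂ heq
      have e₁ := (Finset.mem_filter.1 h₁).2
      have e₂ := (Finset.mem_filter.1 h₂).2
      apply PO.eq_of_filters f l₁ l₂ heq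
      intro j
      rw [← e₁ j, ← e₂ j]
    · intro w hwm
      have hw : w.Perm (L.map f) := by
        rwa [List.mem_toFinset, List.mem_permutations] at hwm
      obtain ⟨l, hlL, hlw, hlf⟩ := PO.exists_rearrange f hw hmL
      refine ⟨l, ?_, hlw⟩
      rw [Finset.mem_filter]
      exact ⟨(hmemP l).2 hlL, by simp [fun j => (hlf j).symm]⟩
  rw [hcard]
  simp [mul_comm]

lemma PO.card_Q (L : List (Fin n)) (hL : L.Nodup) :
    (L.permutations.toFinset.filter (fun m => m.map f = L.map f)).card
      = ∏ j : Fin s, (L.filter (fun x => f x = j)).length.factorial := by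
  classical
  have main : (L.permutations.toFinset.filter (fun m => m.map f = L.map f)).card
      = ((Finset.univ : Finset (Fin s)).pi
          (fun j => (L.filter (fun x => f x = j)).permutations.toFinset)).card := by
    apply Finset.card_bij
      (fun m _ => fun j _ => m.filter (fun x => f x = j))
    · intro m hm
      have hmL : m.Perm L := by
        have := (Finset.mem_filter.1 hm).1
        rwa [List.mem_toFinset, List.mem_permutations] at this
      rw [Finset.mem_pi]
      intro j _
      rw [List.mem_toFinset, List.mem_permutations]
      exact hmL.filter _
    · intro m₁ h₁ m₂ h₂ heq
      have e₁ := (Finset.mem_filter.1 h₁).2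
      have e₂ := (Finset.mem_filter.1 h₂).2
      apply PO.eq_of_filters f m₁ m₂ (by rw [e₁, e₂])
      intro j
      exact congrFun (congrFun heq j) (Finset.mem_univ j)
    · intro o ho
      rw [Finset.mem_pi] at ho
      have hoperm : ∀ j, (o j (Finset.mem_univ j)).Perm (L.filter (fun x => f x = j)) := by
        intro j
        have := ho j (Finset.mem_univ j)
        rwa [List.mem_toFinset, List.mem_permutations] at this
      obtain ⟨m, hmw, hmf⟩ := PO.exists_of_word f (L.map f) (fun j => o j (Finset.mem_univ j))
        (fun j x hx => by
          have := List.of_mem_filter ((hoperm j).mem_iff.1 hx)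
          simpa using this)
        (fun j => by rw [(hoperm j).length_eq, ← PO.count_word f j])
      have hmL : m.Perm L := PO.perm_of_filters f (fun j => by
        rw [hmf j]; exact hoperm j)
      refine ⟨m, ?_, ?_⟩
      · rw [Finset.mem_filter, List.mem_toFinset, List.mem_permutations]
        exact ⟨hmL, by simp [hmw]⟩
      · funext j hj
        exact hmf j
  rw [main, Finset.card_pi]
  apply Finset.prod_congr rfl
  intro j _
  rw [List.toFinset_card_of_nodup (List.nodup_permutations _ (hL.filter _)),
    List.length_permutations]

lemma PO.key (L : List (Fin n)) (hL : L.Nodup) (g : List (Fin n) → ℝ)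
    (hg : ∀ l₁ l₂ : List (Fin n), l₁.Perm L → l₂.Perm L →
      (∀ j, l₁.filter (fun x => f x = j) = l₂.filter (fun x => f x = j)) → g l₁ = g l₂) :
    (∏ j : Fin s, ((L.filter (fun x => f x = j)).length.factorial : ℝ)) *
        ((L.permutations.map g).sum)
      = (L.length.factorial : ℝ) *
        (((L.permutations.filter (fun l => l.map f = L.map f)).map g).sum) := by
  classical
  have hnodupP : L.permutations.Nodup := List.nodup_permutations L hL
  have h1 : (L.permutations.map g).sum = ∑ l ∈ L.permutations.toFinset, g l :=
    (List.sum_toFinset g hnodupP).symm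
  have h2 : ((L.permutations.filter (fun l => l.map f = L.map f)).map g).sum
      = ∑ m ∈ L.permutations.toFinset.filter (fun m => m.map f = L.map f), g m := by
    rw [← List.sum_toFinset g (hnodupP.filter _), List.toFinset_filter]
    apply Finset.sum_congr _ (fun _ _ => rfl)
    apply Finset.filter_congr
    intro m _
    simp
  -- abbreviations
  set W : ℕ := (L.map f).permutations.toFinset.card with hW
  have hsum := PO.sum_fiber f L hL g hg
  have hone := PO.sum_fiber f L hL (fun _ => (1:ℝ)) (fun _ _ _ _ _ => rfl)
  have hPcard : (L.permutations.toFinset.card : ℝ) = (L.length.factorial : ℝ) := by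
    rw [List.toFinset_card_of_nodup hnodupP, List.length_permutations]
  have hQcard : ((L.permutations.toFinset.filter (fun m => m.map f = L.map f)).card : ℝ)
      = ∏ j : Fin s, ((L.filter (fun x => f x = j)).length.factorial : ℝ) := by
    rw [PO.card_Q f L hL]; push_cast; rfl
  rw [Finset.sum_const, Finset.sum_const, nsmul_eq_mul, nsmul_eq_mul, mul_one, mul_one] at hone
  rw [hPcard, hQcard] at hone
  rw [h1, h2, hsum, hone]
  ring

end helpers

/-- Special case 1: if the utility depends only on the within-union relative orders
(transpositions between different unions do not change it), then the partial ordinal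
Shapley value reduces to an average over the within-union permutation subgroup
`Π^λ|_S` (realised as the orderings `l` of `S` with the same union-label pattern as the
increasing sequence `𝔖`). -/
theorem partial_ordinal_shapley_special_case_one (n s : ℕ) (f : Fin n → Fin s)
    (U : List (Fin n) → ℝ) (i : Fin n)
    (hU : ∀ l₁ l₂ : List (Fin n), l₁.Nodup → l₂.Perm l₁ →
      (∀ j : Fin s, l₁.filter (fun x => f x = j) = l₂.filter (fun x => f x = j)) →
      U l₁ = U l₂) :
    (1 : ℝ) / n * ∑ S ∈ (Finset.univ.erase i).powerset,
      (1 : ℝ) / ((S.card.factorial : ℝ) * ((n - 1).choose S.card : ℝ)) *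
        ((S.sort (· ≤ ·)).permutations.map (fun l => U (l ++ [i]) - U l)).sum
    = (1 : ℝ) / n * ∑ S ∈ (Finset.univ.erase i).powerset,
        (1 : ℝ) / (((n - 1).choose S.card : ℝ)) *
          (((S.sort (· ≤ ·)).permutations.filter
              (fun l => l.map f = (S.sort (· ≤ ·)).map f)).map
            (fun l =>
              (1 : ℝ) / (∏ j : Fin s,
                  ((S.filter (fun x => f x = j)).card.factorial : ℝ)) *
                (U (l ++ [i]) - U l))).sum := by
  classical
  congr 1
  apply Finset.sum_congr rfl
  intro S hS
  rw [Finset.mem_powerset] at hS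
  set L := S.sort (· ≤ ·) with hLdef
  have hLnd : L.Nodup := S.sort_nodup _
  have hiS : i ∉ S := fun h => Finset.notMem_erase i _ (hS h)
  have hiL : i ∉ L := fun h => hiS ((Finset.mem_sort _).1 h)
  set g : List (Fin n) → ℝ := fun l => U (l ++ [i]) - U l with hgdef
  have hg : ∀ l₁ l₂ : List (Fin n), l₁.Perm L → l₂.Perm L →
      (∀ j, l₁.filter (fun x => f x = j) = l₂.filter (fun x => f x = j)) →
      g l₁ = g l₂ := by
    intro l₁ l₂ hl₁ hl₂ hfilt
    have nd₁ : l₁.Nodup := hl₁.symm.nodup hLnd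
    have hperm : l₂.Perm l₁ := hl₂.trans hl₁.symm
    have hni : i ∉ l₁ := fun h => hiL (hl₁.mem_iff.1 h)
    have e1 : U l₁ = U l₂ := hU l₁ l₂ nd₁ hperm hfilt
    have e2 : U (l₁ ++ [i]) = U (l₂ ++ [i]) := by
      apply hU _ _ (by simp [List.nodup_append, nd₁, hni]; intro a ha h; subst h; exact hni ha) (hperm.append_right [i])
      intro j
      rw [List.filter_append, List.filter_append, hfilt j]
    simp only [hgdef]
    rw [e1, e2]
  have key := PO.key f L hLnd g hg
  have hlen : L.length = S.card := Finset.length_sort _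
  have hcardfilter : ∀ j : Fin s, (S.filter (fun x => f x = j)).card
      = (L.filter (fun x => f x = j)).length := by
    intro j
    rw [← List.toFinset_card_of_nodup (hLnd.filter _), List.toFinset_filter]
    congr 1
    rw [hLdef, Finset.sort_toFinset]
    apply Finset.filter_congr
    intro x _
    simp
  rw [hlen] at key
  -- rewrite the RHS inner sum, pulling the constant out
  have hconst : (((L.permutations.filter (fun l => l.map f = L.map f)).map
        (fun l => (1 : ℝ) / (∏ j : Fin s,
          ((S.filter (fun x => f x = j)).card.factorial : ℝ)) * (U (l ++ [i]) - U l))).sum)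
      = (1 : ℝ) / (∏ j : Fin s, ((L.filter (fun x => f x = j)).length.factorial : ℝ)) *
        (((L.permutations.filter (fun l => l.map f = L.map f)).map g).sum) := by
    simp only [hcardfilter]
    exact List.sum_map_mul_left _ _ _
  rw [hconst]
  have hC : (((n - 1).choose S.card : ℕ) : ℝ) ≠ 0 := by
    have hle : S.card ≤ n - 1 := by
      have := Finset.card_le_card hS
      rwa [Finset.card_erase_of_mem (Finset.mem_univ i), Finset.card_univ,
        Fintype.card_fin] at this
    exact_mod_cast (Nat.choose_pos hle).ne'
  have hfac : ((S.card.factorial : ℕ) : ℝ) ≠ 0 := by exact_mod_cast S.card.factorial_pos.ne'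
  have hprod : (∏ j : Fin s, ((L.filter (fun x => f x = j)).length.factorial : ℝ)) ≠ 0 := by
    apply Finset.prod_ne_zero_iff.2
    intro j _
    exact_mod_cast (L.filter (fun x => f x = j)).length.factorial_pos.ne'
  field_simp
  linear_combination key
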